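/- Let P : ℝ³ → ℝ be a polynomial function. If there exist s > 0 and 0 ≤ δ < 3 such that ∫_{ℝ³} |P(x)|^s (1+|x|)^{−δ} dx < +∞, then P is identically zero. -/

import Mathlib

open MeasureTheory Filter Metric Real

noncomputable section

/-- Three-dimensional Euclidean space. -/
abbrev E3 : Type := EuclideanSpace ℝ (Fin 3)

open scoped Topology ENNReal Polynomial
open Module

/-! Rescaling gives `∫ f(n x) (1+|x|)^{-δ} dx ≤ n^{δ-d} ∫ f(y) (1+|y|)^{-δ} dy → 0` when `δ < d`,
so by Fatou `liminf f(n x) = 0` for almost every `x`. For `f = |P|^s` this fails on the nonempty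
open set `{P ≠ 0}`: for `x` there, `t ↦ P(t x)` is a nonzero one-variable polynomial, hence bounded
away from zero at infinity. -/

def powerWeight {E : Type*} [Norm E] (δ : ℝ) (x : E) : ℝ≥0∞ :=
  ENNReal.ofReal ((1 + ‖x‖) ^ (-δ))

lemma one_add_div_rpow_neg_le {a r δ : ℝ} (ha : 0 ≤ a) (hr : 1 ≤ r) (hδ : 0 ≤ δ) :
    (1 + a / r) ^ (-δ) ≤ r ^ δ * (1 + a) ^ (-δ) := by
  have hr0 : 0 < r := one_pos.trans_le hr
  calc (1 + a / r) ^ (-δ) ≤ ((1 + a) / r) ^ (-δ) := by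
        refine rpow_le_rpow_of_nonpos (by positivity) ?_ (by linarith)
        rw [add_div]
        gcongr
        exact div_le_one_of_le₀ hr hr0.le
    _ = r ^ δ * (1 + a) ^ (-δ) := by
        rw [div_rpow (by positivity) hr0.le, rpow_neg hr0.le, div_inv_eq_mul, mul_comm]

section HaarScaling

variable {E : Type*} [NormedAddCommGroup E] [NormedSpace ℝ E] [FiniteDimensional ℝ E]
  [MeasurableSpace E] [BorelSpace E] (μ : Measure E) [μ.IsAddHaarMeasure]

theorem lintegral_comp_smul (f : E → ℝ≥0∞) {r : ℝ} (hr : r ≠ 0) :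
    ∫⁻ x, f (r • x) ∂μ = ENNReal.ofReal |(r ^ finrank ℝ E)⁻¹| * ∫⁻ x, f x ∂μ := by
  rw [← smul_eq_mul, ← lintegral_smul_measure, ← Measure.map_addHaar_smul μ hr]
  exact (lintegral_map_equiv f
    (Homeomorph.smul (isUnit_iff_ne_zero.2 hr).unit).toMeasurableEquiv).symm

theorem lintegral_comp_smul_mul_powerWeight_le (f : E → ℝ≥0∞) {r δ : ℝ} (hr : 1 ≤ r)
    (hδ : 0 ≤ δ) :
    ∫⁻ x, f (r • x) * powerWeight δ x ∂μ
      ≤ ENNReal.ofReal (r ^ (δ - finrank ℝ E)) * ∫⁻ x, f x * powerWeight δ x ∂μ := by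
  have hr0 : 0 < r := one_pos.trans_le hr
  have h_weight (y : E) : powerWeight δ (r⁻¹ • y) ≤ ENNReal.ofReal (r ^ δ) * powerWeight δ y := by
    rw [powerWeight, powerWeight, ← ENNReal.ofReal_mul (by positivity), norm_smul,
      norm_inv, norm_of_nonneg hr0.le, inv_mul_eq_div]
    exact ENNReal.ofReal_le_ofReal (one_add_div_rpow_neg_le (norm_nonneg y) hr hδ)
  calc ∫⁻ x, f (r • x) * powerWeight δ x ∂μ
      = ∫⁻ x, f (r • x) * powerWeight δ (r⁻¹ • r • x) ∂μ := by
        simp only [inv_smul_smul₀ hr0.ne']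
    _ = ENNReal.ofReal (r ^ (-(finrank ℝ E : ℝ))) * ∫⁻ y, f y * powerWeight δ (r⁻¹ • y) ∂μ := by
        rw [lintegral_comp_smul μ (fun y => f y * powerWeight δ (r⁻¹ • y)) hr0.ne',
          abs_of_pos (by positivity), rpow_neg hr0.le, rpow_natCast]
    _ ≤ ENNReal.ofReal (r ^ (-(finrank ℝ E : ℝ))) *
          ∫⁻ y, f y * (ENNReal.ofReal (r ^ δ) * powerWeight δ y) ∂μ := by
        gcongr with y
        exact h_weight y
    _ = ENNReal.ofReal (r ^ (δ - finrank ℝ E)) * ∫⁻ x, f x * powerWeight δ x ∂μ := by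
        simp_rw [mul_left_comm (f _)]
        rw [lintegral_const_mul' _ _ ENNReal.ofReal_ne_top, ← mul_assoc,
          ← ENNReal.ofReal_mul (by positivity), ← rpow_add hr0, neg_add_eq_sub]

theorem tendsto_lintegral_comp_natCast_smul_mul_powerWeight (f : E → ℝ≥0∞) {δ : ℝ}
    (hδ0 : 0 ≤ δ) (hδ : δ < finrank ℝ E) (hf : ∫⁻ x, f x * powerWeight δ x ∂μ ≠ ∞) :
    Tendsto (fun n : ℕ => ∫⁻ x, f ((n : ℝ) • x) * powerWeight δ x ∂μ) atTop (𝓝 0) := by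
  have h_rpow :
      Tendsto (fun n : ℕ => ENNReal.ofReal ((n : ℝ) ^ (δ - finrank ℝ E))) atTop (𝓝 0) := by
    have := (tendsto_rpow_neg_atTop (sub_pos.2 hδ)).comp tendsto_natCast_atTop_atTop
    simpa [neg_sub] using ENNReal.tendsto_ofReal this
  have h_bound := ENNReal.Tendsto.mul_const h_rpow (Or.inr hf)
  rw [zero_mul] at h_bound
  refine tendsto_of_tendsto_of_tendsto_of_le_of_le' tendsto_const_nhds h_bound
    (Eventually.of_forall fun _ => zero_le) ?_
  filter_upwards [eventually_ge_atTop 1] with n hn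
  exact lintegral_comp_smul_mul_powerWeight_le μ f (by exact_mod_cast hn) hδ0

theorem ae_liminf_comp_natCast_smul_eq_zero {f : E → ℝ≥0∞} (hf_meas : Measurable f) {δ : ℝ}
    (hδ0 : 0 ≤ δ) (hδ : δ < finrank ℝ E) (hf : ∫⁻ x, f x * powerWeight δ x ∂μ ≠ ∞) :
    ∀ᵐ x ∂μ, liminf (fun n : ℕ => f ((n : ℝ) • x)) atTop = 0 := by
  have h_weight_ne_zero (x : E) : powerWeight δ x ≠ 0 := by
    rw [powerWeight, ENNReal.ofReal_ne_zero_iff]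
    positivity
  have h_meas (n : ℕ) : Measurable fun x => f ((n : ℝ) • x) * powerWeight δ x :=
    (hf_meas.comp (measurable_const_smul _)).mul (by unfold powerWeight; fun_prop)
  have h_fatou : ∫⁻ x, liminf (fun n : ℕ => f ((n : ℝ) • x) * powerWeight δ x) atTop ∂μ = 0 :=
    le_antisymm ((lintegral_liminf_le h_meas).trans_eq
      (tendsto_lintegral_comp_natCast_smul_mul_powerWeight μ f hδ0 hδ hf).liminf_eq) zero_le
  filter_upwards [(lintegral_eq_zero_iff (Measurable.liminf h_meas)).1 h_fatou] with x hx
  rw [Pi.zero_apply, ENNReal.liminf_mul_const_of_ne_zero_of_ne_top (h_weight_ne_zero x)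
    ENNReal.ofReal_ne_top, mul_eq_zero] at hx
  exact hx.resolve_left (h_weight_ne_zero x)

end HaarScaling

theorem Polynomial.exists_pos_eventually_le_abs_eval {p : ℝ[X]} (hp : p ≠ 0) :
    ∃ ε > 0, ∀ᶠ t in atTop, ε ≤ |p.eval t| := by
  rcases (zero_le_degree_iff.2 hp).eq_or_lt with hdeg | hdeg
  · rw [eq_C_of_degree_eq_zero hdeg.symm] at hp ⊢
    refine ⟨|p.coeff 0|, abs_pos.2 fun h => hp (by rw [h, map_zero]), ?_⟩
    simp
  · exact ⟨1, one_pos, (abs_tendsto_atTop p hdeg).eventually_ge_atTop 1⟩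

theorem MvPolynomial.exists_pos_eventually_le_abs_eval_smul {σ : Type*} (Q : MvPolynomial σ ℝ)
    {x : σ → ℝ} (hx : eval x Q ≠ 0) : ∃ ε > 0, ∀ᶠ t : ℝ in atTop, ε ≤ |eval (t • x) Q| := by
  set p : ℝ[X] := aeval (fun i => Polynomial.C (x i) * Polynomial.X) Q
  have hp (t : ℝ) : p.eval t = eval (t • x) Q := by
    rw [← Polynomial.coe_aeval_eq_eval, comp_aeval_apply]
    simp only [map_mul, Polynomial.aeval_C, Polynomial.aeval_X, Algebra.algebraMap_self,
      RingHom.id_apply]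
    show eval _ Q = _
    congr 2
    funext i
    simp [mul_comm]
  have hp0 : p ≠ 0 := fun h => hx (by rw [← one_smul ℝ x, ← hp, h, Polynomial.eval_zero])
  simpa only [hp] using Polynomial.exists_pos_eventually_le_abs_eval hp0

open MvPolynomial in
theorem polynomial_weighted_integrable_eq_zero
    (Q : MvPolynomial (Fin 3) ℝ) (s δ : ℝ) (hs : 0 < s) (hδ0 : 0 ≤ δ) (hδ3 : δ < 3)
    (hint : Integrable
      (fun x : E3 => |MvPolynomial.eval (fun i => x i) Q| ^ s * (1 + ‖x‖) ^ (-δ))) :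
    ∀ x : E3, MvPolynomial.eval (fun i => x i) Q = 0 := by
  intro x₀
  by_contra hx₀
  set f : E3 → ℝ≥0∞ := fun x => ENNReal.ofReal (|eval (fun i => x i) Q| ^ s)
  have hQ : Continuous fun x : E3 => eval (fun i => x i) Q :=
    (continuous_eval Q).comp (PiLp.continuous_ofLp 2 _)
  have hf_fin : ∫⁻ x, f x * powerWeight δ x ≠ ∞ := by
    refine ne_of_eq_of_ne (lintegral_congr fun x => ?_) hint.lintegral_lt_top.ne
    rw [powerWeight, ← ENNReal.ofReal_mul (by positivity)]
  have h_ae := ae_liminf_comp_natCast_smul_eq_zero volume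
    (hQ.measurable.abs.pow_const s).ennreal_ofReal hδ0 (by rwa [finrank_euclideanSpace_fin]) hf_fin
  have h_open : IsOpen {x : E3 | eval (fun i => x i) Q ≠ 0} := isOpen_ne_fun hQ continuous_const
  obtain ⟨x, hxQ, hx⟩ := Measure.exists_mem_of_measure_ne_zero_of_ae
    (h_open.measure_pos volume ⟨x₀, hx₀⟩).ne' (ae_restrict_of_ae h_ae)
  obtain ⟨ε, hε, h_ev⟩ := exists_pos_eventually_le_abs_eval_smul Q hxQ
  have h_lower : ENNReal.ofReal (ε ^ s) ≤ liminf (fun n : ℕ => f ((n : ℝ) • x)) atTop := by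
    refine le_liminf_of_le (by isBoundedDefault) (h_ev.natCast_atTop.mono fun n hn => ?_)
    exact ENNReal.ofReal_le_ofReal (rpow_le_rpow hε.le hn hs.le)
  rw [hx, nonpos_iff_eq_zero, ENNReal.ofReal_eq_zero] at h_lower
  exact (rpow_pos_of_pos hε s).not_ge h_lower
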